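/- Let G be a simple graph on n ≥ 4 vertices. Suppose that for every 4-element vertex subset S such that the subgraph of G induced on S is isomorphic to one of K_{1,2} ∪ K_1, K_3 ∪ K_1, K_{1,3}, K_{1,3}+e, or P_4, and for every pair of vertices x, y ∈ S that are nonadjacent in G, one has d(x) + d(y) ≥ n (degrees taken in G). If G has a vertex v with d(v) ≥ 2, then G is Hamiltonian. -/

import Mathlib

/-!
The hypothesis forces Ore's condition `d(x) + d(y) ≥ n` for all distinct nonadjacent `x, y`,
and then Ore's theorem applies. Given such `x, y`, one finds `z, w` such that `{x, y, z, w}`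
induces one of the five graphs. If `x` and `y` have a common neighbour `z`, any `w` not adjacent
to both of them will do, and if there is no such `w`, then `d(x), d(y) ≥ n - 2`. Otherwise take a
neighbour `z` of `x` and some `w` adjacent to `x` or `z`; it exists unless `xz` is an isolated
edge, which is ruled out using the vertex of degree at least `2`.

Ore's theorem is proved by the longest-path argument: the ends of a longest path cross, which
closes it into a cycle through the same vertices, and a vertex off this cycle would extend it.
-/

open SimpleGraph

/-- `K_{1,2} ∪ K_1`: a path on the vertices 0,1,2 together with the isolated vertex 3. -/
def pathUnionK1 : SimpleGraph (Fin 4) := SimpleGraph.fromEdgeSet {s(0, 1), s(1, 2)}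

/-- `K_3 ∪ K_1`: a triangle on the vertices 0,1,2 together with the isolated vertex 3. -/
def triangleUnionK1 : SimpleGraph (Fin 4) :=
  SimpleGraph.fromEdgeSet {s(0, 1), s(1, 2), s(0, 2)}

/-- `K_{1,3}`: the star with center 0 and leaves 1,2,3. -/
def star13 : SimpleGraph (Fin 4) := SimpleGraph.fromEdgeSet {s(0, 1), s(0, 2), s(0, 3)}

/-- `K_{1,3} + e` (the paw): the star `K_{1,3}` with an added edge between leaves 1 and 2. -/
def star13PlusE : SimpleGraph (Fin 4) :=
  SimpleGraph.fromEdgeSet {s(0, 1), s(0, 2), s(0, 3), s(1, 2)}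

/-- `P_4`: the path 0-1-2-3. -/
def path4 : SimpleGraph (Fin 4) := SimpleGraph.fromEdgeSet {s(0, 1), s(1, 2), s(2, 3)}

namespace SimpleGraph

variable {V : Type*} {G : SimpleGraph V}

namespace Walk

variable {a b : V}

lemma IsPath.mem_support_of_adj_start {p : G.Walk a b} (hp : p.IsPath)
    (hmax : ∀ (c d : V) (q : G.Walk c d), q.IsPath → q.length ≤ p.length) {x : V}
    (hx : G.Adj a x) : x ∈ p.support := by
  by_contra h
  have := hmax _ _ _ (hp.cons h (h := hx.symm))
  simp at this

lemma exists_crossing_of_length_lt_degree_add [Fintype V] [DecidableRel G.Adj] (p : G.Walk a b)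
    (ha : ∀ x, G.Adj a x → x ∈ p.support) (hb : ∀ x, G.Adj b x → x ∈ p.support)
    (hlt : p.length < G.degree a + G.degree b) :
    ∃ i < p.length, G.Adj a (p.getVert (i + 1)) ∧ G.Adj b (p.getVert i) := by
  classical
  set A := (Finset.range p.length).filter fun i ↦ G.Adj a (p.getVert (i + 1))
  set B := (Finset.range p.length).filter fun i ↦ G.Adj b (p.getVert i)
  have hA : G.degree a ≤ A.card := by
    rw [← card_neighborFinset_eq_degree]
    refine (Finset.card_le_card fun x hx ↦ ?_).trans
      (Finset.card_image_le (f := fun i ↦ p.getVert (i + 1)))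
    rw [mem_neighborFinset] at hx
    obtain ⟨j, rfl, hj⟩ := mem_support_iff_exists_getVert.mp (ha x hx)
    have hj0 : j ≠ 0 := by rintro rfl; simp at hx
    obtain ⟨k, rfl⟩ := Nat.exists_eq_succ_of_ne_zero hj0
    exact Finset.mem_image_of_mem _ (by simpa [A] using ⟨hj, hx⟩)
  have hB : G.degree b ≤ B.card := by
    rw [← card_neighborFinset_eq_degree]
    refine (Finset.card_le_card fun x hx ↦ ?_).trans (Finset.card_image_le (f := p.getVert))
    rw [mem_neighborFinset] at hx
    obtain ⟨j, rfl, hj⟩ := mem_support_iff_exists_getVert.mp (hb x hx)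
    have hjL : j ≠ p.length := by rintro rfl; simp at hx
    exact Finset.mem_image_of_mem _ (by simpa [B] using ⟨by omega, hx⟩)
  have hAB : (A ∩ B).Nonempty := by
    have hunion : (A ∪ B).card ≤ p.length :=
      (Finset.card_le_card (Finset.union_subset (Finset.filter_subset _ _)
        (Finset.filter_subset _ _))).trans (Finset.card_range _).le
    have := Finset.card_union_add_card_inter A B
    rw [← Finset.card_pos]
    omega
  obtain ⟨i, hi⟩ := hAB
  simp only [A, B, Finset.mem_inter, Finset.mem_filter, Finset.mem_range] at hi
  exact ⟨i, hi.1.1, hi.1.2, hi.2.2⟩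

lemma IsPath.exists_isCycle_of_crossing {p : G.Walk a b} (hp : p.IsPath) (hlen : 2 ≤ p.length)
    {i : ℕ} (hi : i < p.length) (ha : G.Adj a (p.getVert (i + 1)))
    (hb : G.Adj b (p.getVert i)) :
    ∃ (u : V) (c : G.Walk u u), c.IsCycle ∧ c.length = p.length + 1 ∧
      ∀ x, x ∈ c.support ↔ x ∈ p.support := by
  -- the cycle `vᵢ₊₁ a ⋯ vᵢ b ⋯ vᵢ₊₁`, where `vⱼ = p.getVert j`
  set q := (p.take i).append (cons hb.symm (p.drop (i + 1)).reverse)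
  have hperm : q.support.Perm p.support := by
    conv_rhs => rw [← List.take_append_drop (i + 1) p.support]
    simp only [q, support_append, support_take, support_cons, support_reverse,
      drop_support_eq_support_drop_min, Nat.min_eq_left hi, List.tail_cons]
    exact List.Perm.append_left _ (List.reverse_perm _)
  have hq : q.IsPath := (isPath_def _).mpr (hperm.nodup_iff.mpr hp.support_nodup)
  have hqlen : q.length = p.length := by
    simp only [q, length_append, take_length, length_cons, length_reverse, drop_length]
    omega
  refine ⟨_, cons ha.symm q, ?_, by rw [length_cons, hqlen], fun x ↦ ?_⟩
  · rw [isCycle_iff_isPath_tail_and_le_length, length_cons, hqlen]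
    exact ⟨by simpa using hq, by omega⟩
  · rw [support_cons, List.mem_cons, hperm.mem_iff]
    exact or_iff_right_of_imp fun h ↦ h ▸ p.getVert_mem_support _

lemma IsCycle.exists_isPath_length_eq [DecidableEq V] {w u v : V} {c : G.Walk w w} (hc : c.IsCycle)
    (hv : v ∈ c.support) (huv : G.Adj u v) (hu : u ∉ c.support) :
    ∃ (x : V) (q : G.Walk u x), q.IsPath ∧ q.length = c.length := by
  have hc' := hc.rotate hv
  refine ⟨_, cons huv (c.rotate v hv).tail.reverse, hc'.isPath_tail.reverse.cons ?_, ?_⟩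
  · rw [support_reverse, List.mem_reverse, support_tail_of_not_nil _ hc'.not_nil]
    exact fun h ↦ hu ((mem_support_rotate_iff ..).mp (List.mem_of_mem_tail h))
  · rw [length_cons, length_reverse, length_tail_add_one hc'.not_nil, length_rotate]

end Walk

open Walk

lemma degree_le_one_of_forall_adj_eq {x z : V} [Fintype (G.neighborSet x)]
    (h : ∀ w, G.Adj x w → w = z) : G.degree x ≤ 1 := by
  rw [← card_neighborFinset_eq_degree]
  exact Finset.card_le_one.mpr fun a ha b hb ↦ by
    rw [mem_neighborFinset] at ha hb
    rw [h a ha, h b hb]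

section Finite

variable [Fintype V]

lemma exists_isPath_forall_isPath_length_le [Nonempty V] :
    ∃ (a b : V) (p : G.Walk a b), p.IsPath ∧
      ∀ (c d : V) (q : G.Walk c d), q.IsPath → q.length ≤ p.length := by
  classical
  let P : ℕ → Prop := fun l ↦ ∃ (a b : V) (p : G.Walk a b), p.IsPath ∧ p.length = l
  obtain ⟨a, b, p, hp, hlen⟩ : P (Nat.findGreatest P (Fintype.card V)) :=
    Nat.findGreatest_spec (Nat.zero_le _) ⟨Classical.arbitrary V, _, nil, .nil, rfl⟩
  exact ⟨a, b, p, hp, fun c d q hq ↦ hlen ▸ Nat.le_findGreatest hq.length_lt.le ⟨c, d, q, hq, rfl⟩⟩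

lemma card_compl_pair_add_two [DecidableEq V] {x y : V} (hxy : x ≠ y) :
    ({x, y}ᶜ : Finset V).card + 2 = Fintype.card V :=
  Finset.card_pair hxy ▸ Finset.card_compl_add_card _

variable [DecidableRel G.Adj]

lemma neighborFinset_subset_compl_pair [DecidableEq V] {x y : V} (h : ¬G.Adj x y) :
    G.neighborFinset x ⊆ {x, y}ᶜ := by
  intro z hz
  rw [mem_neighborFinset] at hz
  simp only [Finset.mem_compl, Finset.mem_insert, Finset.mem_singleton, not_or]
  exact ⟨(G.ne_of_adj hz).symm, by rintro rfl; exact h hz⟩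

lemma degree_add_two_le_card {x y : V} (hxy : x ≠ y) (h : ¬G.Adj x y) :
    G.degree x + 2 ≤ Fintype.card V := by
  classical
  rw [← card_neighborFinset_eq_degree, ← card_compl_pair_add_two hxy]
  exact Nat.add_le_add_right (Finset.card_le_card (neighborFinset_subset_compl_pair h)) 2

lemma card_le_degree_add_two [DecidableEq V] {x y : V} (h : ∀ w, w ≠ x → w ≠ y → G.Adj x w) :
    Fintype.card V ≤ G.degree x + 2 := by
  rw [← Finset.card_compl_add_card {x, y}, ← card_neighborFinset_eq_degree]
  refine Nat.add_le_add (Finset.card_le_card fun w hw ↦ ?_) Finset.card_le_two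
  simp only [Finset.mem_compl, Finset.mem_insert, Finset.mem_singleton, not_or] at hw
  exact (mem_neighborFinset _ _ _).mpr (h w hw.1 hw.2)

lemma exists_adj_adj_of_card_le_degree_add {x y : V} (hxy : x ≠ y) (h : ¬G.Adj x y)
    (hdeg : Fintype.card V ≤ G.degree x + G.degree y) : ∃ z, G.Adj x z ∧ G.Adj y z := by
  classical
  have hunion : (G.neighborFinset x ∪ G.neighborFinset y).card + 2 ≤ Fintype.card V := by
    rw [← card_compl_pair_add_two hxy]
    refine Nat.add_le_add_right (Finset.card_le_card
      (Finset.union_subset (neighborFinset_subset_compl_pair h) ?_)) 2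
    rw [Finset.pair_comm]
    exact neighborFinset_subset_compl_pair fun h' ↦ h h'.symm
  have := Finset.card_union_add_card_inter (G.neighborFinset x) (G.neighborFinset y)
  rw [card_neighborFinset_eq_degree, card_neighborFinset_eq_degree] at this
  obtain ⟨z, hz⟩ : (G.neighborFinset x ∩ G.neighborFinset y).Nonempty := by
    rw [← Finset.card_pos]
    omega
  simp only [Finset.mem_inter, mem_neighborFinset] at hz
  exact ⟨z, hz⟩

def OreCondition (G : SimpleGraph V) [DecidableRel G.Adj] : Prop :=
  ∀ x y, x ≠ y → ¬G.Adj x y → Fintype.card V ≤ G.degree x + G.degree y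

lemma OreCondition.exists_adj_adj_ne (hG : G.OreCondition) (hn : 3 ≤ Fintype.card V) :
    ∃ v a b, G.Adj v a ∧ G.Adj v b ∧ a ≠ b := by
  obtain ⟨x, y, z, hxy, hxz, hyz⟩ := Fintype.two_lt_card_iff.mp hn
  by_cases hxy' : G.Adj x y
  · by_cases hxz' : G.Adj x z
    · exact ⟨x, y, z, hxy', hxz', hyz⟩
    · obtain ⟨t, hxt, hzt⟩ := exists_adj_adj_of_card_le_degree_add hxz hxz' (hG x z hxz hxz')
      exact ⟨t, x, z, hxt.symm, hzt.symm, hxz⟩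
  · obtain ⟨t, hxt, hyt⟩ := exists_adj_adj_of_card_le_degree_add hxy hxy' (hG x y hxy hxy')
    exact ⟨t, x, y, hxt.symm, hyt.symm, hxy⟩

lemma OreCondition.exists_crossing (hG : G.OreCondition) {a b : V} {p : G.Walk a b}
    (hp : p.IsPath) (hlen : 2 ≤ p.length) (ha : ∀ x, G.Adj a x → x ∈ p.support)
    (hb : ∀ x, G.Adj b x → x ∈ p.support) :
    ∃ i < p.length, G.Adj a (p.getVert (i + 1)) ∧ G.Adj b (p.getVert i) := by
  by_cases hab : G.Adj a b
  · exact ⟨0, by omega, by simpa using p.adj_getVert_succ (i := 0) (by omega),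
      by simpa using hab.symm⟩
  · have hne : a ≠ b := by
      rintro rfl
      simp [length_eq_zero_iff.mpr (isPath_iff_nil.mp hp)] at hlen
    exact p.exists_crossing_of_length_lt_degree_add ha hb (hp.length_lt.trans_le (hG a b hne hab))

theorem OreCondition.isHamiltonian [DecidableEq V] (hG : G.OreCondition)
    (hn : 3 ≤ Fintype.card V) : G.IsHamiltonian := by
  obtain ⟨v, x, y, hvx, hvy, hxy⟩ := hG.exists_adj_adj_ne hn
  have : Nonempty V := ⟨v⟩
  obtain ⟨a, b, p, hp, hmax⟩ := exists_isPath_forall_isPath_length_le (G := G)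
  have hlen : 2 ≤ p.length :=
    hmax _ _ (cons hvx.symm (cons hvy nil)) (by simp [hxy, hvx.ne.symm, hvy.ne])
  have hstart : ∀ x, G.Adj a x → x ∈ p.support := fun x ↦ hp.mem_support_of_adj_start hmax
  have hend : ∀ x, G.Adj b x → x ∈ p.support := fun x hx ↦ by
    simpa using hp.reverse.mem_support_of_adj_start (by simpa using hmax) hx
  obtain ⟨i, hi, hai, hbi⟩ := hG.exists_crossing hp hlen hstart hend
  obtain ⟨u, c, hc, hclen, hcsupp⟩ := hp.exists_isCycle_of_crossing hlen hi hai hbi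
  have hall : ∀ x, x ∈ p.support := by
    by_contra! ⟨x, hx⟩
    have hxa : ¬G.Adj a x := fun h ↦ hx (hstart x h)
    have hax : a ≠ x := by rintro rfl; exact hx p.start_mem_support
    obtain ⟨t, hat, hxt⟩ := exists_adj_adj_of_card_le_degree_add hax hxa (hG a x hax hxa)
    obtain ⟨_, q, hq, hqlen⟩ :=
      hc.exists_isPath_length_eq ((hcsupp t).mpr (hstart t hat)) hxt (by rwa [hcsupp])
    have := hmax _ _ q hq
    omega
  have hpn := (hp.isHamiltonian_of_mem hall).length_eq
  intro _
  exact ⟨u, c, isHamiltonianCycle_iff_isCycle_and_length_eq.mpr ⟨hc, by omega⟩⟩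

def OreOn (G : SimpleGraph V) [DecidableRel G.Adj] (S : Finset V) : Prop :=
  ∀ x ∈ S, ∀ y ∈ S, x ≠ y → ¬G.Adj x y → Fintype.card V ≤ G.degree x + G.degree y

def InducedOreCondition (G : SimpleGraph V) [DecidableRel G.Adj] : Prop :=
  ∀ S : Finset V, S.card = 4 →
    (Nonempty (G.induce (S : Set V) ≃g pathUnionK1) ∨
     Nonempty (G.induce (S : Set V) ≃g triangleUnionK1) ∨
     Nonempty (G.induce (S : Set V) ≃g star13) ∨
     Nonempty (G.induce (S : Set V) ≃g star13PlusE) ∨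
     Nonempty (G.induce (S : Set V) ≃g path4)) →
    G.OreOn S

variable [DecidableEq V]

namespace InducedOreCondition

lemma oreOn_of_adj_iff (hG : G.InducedOreCondition) {H : SimpleGraph (Fin 4)}
    (hH : H = pathUnionK1 ∨ H = triangleUnionK1 ∨ H = star13 ∨ H = star13PlusE ∨ H = path4)
    {x₀ x₁ x₂ x₃ : V} (h₀₁ : x₀ ≠ x₁) (h₀₂ : x₀ ≠ x₂) (h₀₃ : x₀ ≠ x₃) (h₁₂ : x₁ ≠ x₂)
    (h₁₃ : x₁ ≠ x₃) (h₂₃ : x₂ ≠ x₃)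
    (hadj : ∀ i j, i < j → (G.Adj (![x₀, x₁, x₂, x₃] i) (![x₀, x₁, x₂, x₃] j) ↔ H.Adj i j)) :
    G.OreOn {x₀, x₁, x₂, x₃} := by
  have hinj : Function.Injective ![x₀, x₁, x₂, x₃] := by
    simp [Function.Injective, Fin.forall_fin_succ, h₀₁, h₀₂, h₀₃, h₁₂, h₁₃, h₂₃, h₀₁.symm,
      h₀₂.symm, h₀₃.symm, h₁₂.symm, h₁₃.symm, h₂₃.symm]
  have hadj' (i j : Fin 4) : G.Adj (![x₀, x₁, x₂, x₃] i) (![x₀, x₁, x₂, x₃] j) ↔ H.Adj i j := by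
    rcases lt_trichotomy i j with hij | rfl | hij
    · exact hadj i j hij
    · exact iff_of_false (G.irrefl) (H.irrefl)
    · rw [G.adj_comm, H.adj_comm]
      exact hadj j i hij
  let e : H ↪g G := ⟨⟨_, hinj⟩, hadj' _ _⟩
  have hS : ({x₀, x₁, x₂, x₃} : Finset V) = Finset.univ.map e.toEmbedding := by
    ext; simp [e, Fin.exists_fin_succ, eq_comm]
  have hiso : Nonempty (G.induce (({x₀, x₁, x₂, x₃} : Finset V) : Set V) ≃g H) := by
    rw [hS, Finset.coe_map, Finset.coe_univ, Set.image_univ]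
    exact ⟨e.isoInduceRange.symm⟩
  refine hG _ (by simp [hS]) ?_
  rcases hH with rfl | rfl | rfl | rfl | rfl <;> simp [hiso]

/-- The set `{a, v, b, t}` induces `K_{1,2} ∪ K_1` or `K_3 ∪ K_1`. -/
lemma oreOn_of_cherry_of_isolated (hG : G.InducedOreCondition) {a v b t : V}
    (hav : G.Adj a v) (hvb : G.Adj v b) (hab : a ≠ b) (hat : ¬G.Adj a t) (hvt : ¬G.Adj v t)
    (hbt : ¬G.Adj b t) : G.OreOn {a, v, b, t} := by
  by_cases hab' : G.Adj a b
  · refine hG.oreOn_of_adj_iff (H := triangleUnionK1) (by simp) hav.ne hab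
      (fun h ↦ hvt (h ▸ hav.symm)) hvb.ne (fun h ↦ hat (h ▸ hav)) (fun h ↦ hvt (h ▸ hvb)) ?_
    intro i j hij
    fin_cases i <;> fin_cases j <;> simp [triangleUnionK1, hav, hvb, hab', hat, hvt, hbt] at hij ⊢
  · refine hG.oreOn_of_adj_iff (H := pathUnionK1) (by simp) hav.ne hab
      (fun h ↦ hvt (h ▸ hav.symm)) hvb.ne (fun h ↦ hat (h ▸ hav)) (fun h ↦ hvt (h ▸ hvb)) ?_
    intro i j hij
    fin_cases i <;> fin_cases j <;> simp [pathUnionK1, hav, hvb, hab', hat, hvt, hbt] at hij ⊢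

lemma oreOn_of_star (hG : G.InducedOreCondition) {c l₁ l₂ l₃ : V} (h₁ : G.Adj c l₁)
    (h₂ : G.Adj c l₂) (h₃ : G.Adj c l₃) (h₁₂ : ¬G.Adj l₁ l₂) (h₁₃ : ¬G.Adj l₁ l₃)
    (h₂₃ : ¬G.Adj l₂ l₃) (n₁₂ : l₁ ≠ l₂) (n₁₃ : l₁ ≠ l₃) (n₂₃ : l₂ ≠ l₃) :
    G.OreOn {c, l₁, l₂, l₃} := by
  refine hG.oreOn_of_adj_iff (H := star13) (by simp) h₁.ne h₂.ne h₃.ne n₁₂ n₁₃ n₂₃ ?_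
  intro i j hij
  fin_cases i <;> fin_cases j <;> simp [star13, h₁, h₂, h₃, h₁₂, h₁₃, h₂₃] at hij ⊢

lemma oreOn_of_paw (hG : G.InducedOreCondition) {x₀ x₁ x₂ x₃ : V} (h₀₁ : G.Adj x₀ x₁)
    (h₀₂ : G.Adj x₀ x₂) (h₀₃ : G.Adj x₀ x₃) (h₁₂ : G.Adj x₁ x₂) (h₁₃ : ¬G.Adj x₁ x₃)
    (h₂₃ : ¬G.Adj x₂ x₃) : G.OreOn {x₀, x₁, x₂, x₃} := by
  refine hG.oreOn_of_adj_iff (H := star13PlusE) (by simp) h₀₁.ne h₀₂.ne h₀₃.ne h₁₂.ne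
    (fun h ↦ h₂₃ (h ▸ h₁₂.symm)) (fun h ↦ h₁₃ (h ▸ h₁₂)) ?_
  intro i j hij
  fin_cases i <;> fin_cases j <;> simp [star13PlusE, h₀₁, h₀₂, h₀₃, h₁₂, h₁₃, h₂₃] at hij ⊢

lemma oreOn_of_path4 (hG : G.InducedOreCondition) {x₀ x₁ x₂ x₃ : V} (h₀₁ : G.Adj x₀ x₁)
    (h₁₂ : G.Adj x₁ x₂) (h₂₃ : G.Adj x₂ x₃) (h₀₂ : ¬G.Adj x₀ x₂) (h₀₃ : ¬G.Adj x₀ x₃)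
    (h₁₃ : ¬G.Adj x₁ x₃) : G.OreOn {x₀, x₁, x₂, x₃} := by
  refine hG.oreOn_of_adj_iff (H := path4) (by simp) h₀₁.ne (fun h ↦ h₀₃ (h ▸ h₂₃))
    (fun h ↦ h₁₃ (h ▸ h₀₁.symm)) h₁₂.ne (fun h ↦ h₀₃ (h ▸ h₀₁)) h₂₃.ne ?_
  intro i j hij
  fin_cases i <;> fin_cases j <;> simp [path4, h₀₁, h₁₂, h₂₃, h₀₂, h₀₃, h₁₃] at hij ⊢

lemma two_le_degree_of_not_adj (hG : G.InducedOreCondition) {v a b x : V} (hva : G.Adj v a)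
    (hvb : G.Adj v b) (hab : a ≠ b) (hxa : ¬G.Adj x a) (hxv : ¬G.Adj x v) (hxb : ¬G.Adj x b) :
    2 ≤ G.degree x := by
  have hxv' : x ≠ v := fun h ↦ hxa (h ▸ hva)
  have hore := hG.oreOn_of_cherry_of_isolated hva.symm hvb hab (fun h ↦ hxa h.symm)
    (fun h ↦ hxv h.symm) (fun h ↦ hxb h.symm) x (by simp) v (by simp) hxv' hxv
  have := degree_add_two_le_card hxv'.symm fun h ↦ hxv h.symm
  omega

lemma exists_adj (hG : G.InducedOreCondition) {v a b : V} (hva : G.Adj v a) (hvb : G.Adj v b)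
    (hab : a ≠ b) (x : V) : ∃ z, G.Adj x z := by
  by_contra! h
  have := hG.two_le_degree_of_not_adj hva hvb hab (h a) (h v) (h b)
  have := degree_le_one_of_forall_adj_eq (z := x) fun w hw ↦ absurd hw (h w)
  omega

lemma card_le_degree_add_of_common_adj_of_not_adj (hG : G.InducedOreCondition) {x y z w : V}
    (hxy : x ≠ y) (hnxy : ¬G.Adj x y) (hzx : G.Adj z x) (hzy : G.Adj z y) (hwx : w ≠ x)
    (hwy : w ≠ y) (hnwy : ¬G.Adj w y) : Fintype.card V ≤ G.degree x + G.degree y := by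
  by_cases hwx' : G.Adj w x <;> by_cases hwz : G.Adj w z
  · exact hG.oreOn_of_paw hzx hwz.symm hzy hwx'.symm hnxy hnwy x (by simp) y (by simp) hxy hnxy
  · exact hG.oreOn_of_path4 hwx' hzx.symm hzy hwz hnwy hnxy x (by simp) y (by simp) hxy hnxy
  · exact hG.oreOn_of_star hzx hzy hwz.symm hnxy (fun h ↦ hwx' h.symm) (fun h ↦ hnwy h.symm)
      hxy hwx.symm hwy.symm x (by simp) y (by simp) hxy hnxy
  · exact hG.oreOn_of_cherry_of_isolated hzx.symm hzy hxy (fun h ↦ hwx' h.symm)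
      (fun h ↦ hwz h.symm) (fun h ↦ hnwy h.symm) x (by simp) y (by simp) hxy hnxy

lemma card_le_degree_add_of_common_adj (hG : G.InducedOreCondition) (hn : 4 ≤ Fintype.card V)
    {x y z : V} (hxy : x ≠ y) (hnxy : ¬G.Adj x y) (hzx : G.Adj z x) (hzy : G.Adj z y) :
    Fintype.card V ≤ G.degree x + G.degree y := by
  by_cases h : ∃ w, w ≠ x ∧ w ≠ y ∧ ¬(G.Adj w x ∧ G.Adj w y)
  · obtain ⟨w, hwx, hwy, hw⟩ := h
    rcases not_and_or.mp hw with hnwx | hnwy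
    · rw [add_comm]
      exact hG.card_le_degree_add_of_common_adj_of_not_adj hxy.symm (fun h ↦ hnxy h.symm)
        hzy hzx hwy hwx hnwx
    · exact hG.card_le_degree_add_of_common_adj_of_not_adj hxy hnxy hzx hzy hwx hwy hnwy
  · push Not at h
    have hx := card_le_degree_add_two fun w hwx hwy ↦ (h w hwx hwy).1.symm
    have hy := card_le_degree_add_two fun w hwy hwx ↦ (h w hwx hwy).2.symm
    omega

lemma card_le_degree_add_of_no_common_adj (hG : G.InducedOreCondition) {v a b : V}
    (hva : G.Adj v a) (hvb : G.Adj v b) (hab : a ≠ b) {x y : V} (hxy : x ≠ y)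
    (hnxy : ¬G.Adj x y) (h : ∀ z, G.Adj x z → ¬G.Adj y z) :
    Fintype.card V ≤ G.degree x + G.degree y := by
  obtain ⟨z, hxz⟩ := hG.exists_adj hva hvb hab x
  have hyz : ¬G.Adj y z := h z hxz
  by_cases hw : ∃ w, w ≠ x ∧ w ≠ z ∧ (G.Adj w x ∨ G.Adj w z)
  · obtain ⟨w, hwx, hwz, hw⟩ := hw
    by_cases hwy : G.Adj w y
    · have hnwx : ¬G.Adj w x := fun h' ↦ h w h'.symm hwy.symm
      exact hG.oreOn_of_path4 hxz (hw.resolve_left hnwx).symm hwy (fun h' ↦ hnwx h'.symm) hnxy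
        (fun h' ↦ hyz h'.symm) x (by simp) y (by simp) hxy hnxy
    · rcases hw with hwx' | hwz'
      · exact hG.oreOn_of_cherry_of_isolated hxz.symm hwx'.symm hwz.symm (fun h' ↦ hyz h'.symm)
          hnxy hwy x (by simp) y (by simp) hxy hnxy
      · exact hG.oreOn_of_cherry_of_isolated hxz hwz'.symm hwx.symm hnxy (fun h' ↦ hyz h'.symm)
          hwy x (by simp) y (by simp) hxy hnxy
  · push Not at hw
    -- `xz` is an isolated edge, so `x` sees none of `v` and its neighbours `a, b`
    exfalso
    have hNx : ∀ t, G.Adj x t → t = z := fun t ht ↦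
      by_contra fun htz ↦ (hw t ht.ne.symm htz).1 ht.symm
    have hNz : ∀ t, G.Adj z t → t = x := fun t ht ↦
      by_contra fun htx ↦ (hw t htx ht.ne.symm).2 ht.symm
    have hxv : ¬G.Adj x v := fun h' ↦ by
      obtain rfl := hNx v h'
      exact hab ((hNz a hva).trans (hNz b hvb).symm)
    have hxa : ¬G.Adj x a := fun h' ↦ by
      obtain rfl := hNx a h'
      obtain rfl := hNz v hva.symm
      exact hab (hNx b hvb).symm
    have hxb : ¬G.Adj x b := fun h' ↦ by
      obtain rfl := hNx b h'
      obtain rfl := hNz v hvb.symm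
      exact hab (hNx a hva)
    have := hG.two_le_degree_of_not_adj hva hvb hab hxa hxv hxb
    have := degree_le_one_of_forall_adj_eq hNx
    omega

theorem oreCondition (hG : G.InducedOreCondition) (hn : 4 ≤ Fintype.card V) {v a b : V}
    (hva : G.Adj v a) (hvb : G.Adj v b) (hab : a ≠ b) : G.OreCondition := by
  intro x y hxy hnxy
  by_cases h : ∃ z, G.Adj z x ∧ G.Adj z y
  · obtain ⟨z, hzx, hzy⟩ := h
    exact hG.card_le_degree_add_of_common_adj hn hxy hnxy hzx hzy
  · push Not at h
    exact hG.card_le_degree_add_of_no_common_adj hva hvb hab hxy hnxy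
      fun z hxz hyz ↦ h z hxz.symm hyz.symm

end InducedOreCondition

end Finite

end SimpleGraph

/-- **Theorem 1.** Let `G` be a graph on `n ≥ 4` vertices satisfying `d(x) + d(y) ≥ n` for
each pair of nonadjacent vertices `x, y` of every 4-element induced subgraph isomorphic to
`K_{1,2} ∪ K_1`, `K_3 ∪ K_1`, `K_{1,3}`, `K_{1,3} + e` or `P_4`. If `G` has a vertex `v`
with `d(v) ≥ 2`, then `G` is Hamiltonian. -/
theorem stmt0 {V : Type*} [Fintype V] [DecidableEq V]
    (G : SimpleGraph V) [DecidableRel G.Adj]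
    (hn : 4 ≤ Fintype.card V)
    (hcond : ∀ S : Finset V, S.card = 4 →
      (Nonempty (G.induce (S : Set V) ≃g pathUnionK1) ∨
       Nonempty (G.induce (S : Set V) ≃g triangleUnionK1) ∨
       Nonempty (G.induce (S : Set V) ≃g star13) ∨
       Nonempty (G.induce (S : Set V) ≃g star13PlusE) ∨
       Nonempty (G.induce (S : Set V) ≃g path4)) →
      ∀ x ∈ S, ∀ y ∈ S, x ≠ y → ¬ G.Adj x y →
        Fintype.card V ≤ G.degree x + G.degree y)
    (v : V) (hv : 2 ≤ G.degree v) :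
    G.IsHamiltonian := by
  obtain ⟨a, ha, b, hb, hab⟩ := Finset.one_lt_card.mp
    ((G.card_neighborFinset_eq_degree v).symm ▸ hv : 1 < (G.neighborFinset v).card)
  rw [mem_neighborFinset] at ha hb
  exact (InducedOreCondition.oreCondition hcond hn ha hb hab).isHamiltonian (by omega)
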